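/- Let I = {1,…,κ} with κ ≥ 2, and for each i ∈ I let A_i ∈ ℝ^{d×d} be invertible with ‖A_i‖ ≤ ᾱ < 1 and let a_i ∈ ℝ^d. Let E be the attractor of the affine IFS {f_i(x) = A_i x + a_i}, and for i ∈ I set E_i = f_i(E). Define M ∈ ℝ^{κ×κ} by M_{ij} = 1 if conv(E_i) ∩ conv(E_j) ≠ ∅ and M_{ij} = 0 otherwise, where conv denotes convex hull. If M is irreducible (for all i, j there exists n > 0 with (M^n)_{ij} > 0), then for every e ∈ ℝ^d, {x·e : x ∈ E} = {x·e : x ∈ conv(E)}; in particular, {x·e : x ∈ E} is a closed interval or a single point. -/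

import Mathlib

open Set Matrix

noncomputable section

/-!
Fix a direction and project onto it. The projections of the convex hulls of the first-level
pieces are intervals, and irreducibility chains them together by overlaps, so their union is an
interval; it contains the projection of `E`, hence that of `conv E`. Since the composition of the
projection with any `fᵢ` is again an affine functional, this can be iterated: every point of the
projection of `conv E` lies in the projection of some `f_w(conv E)` with `|w| = n`, a set of
diameter `O(ᾱⁿ)` containing points of `E`. So the projection of `E` is dense in the projection of
`conv E`, and it is closed.
-/

/-- operator (Euclidean) norm of a `d × d` real matrix -/
noncomputable def opN {d : ℕ} (A : Matrix (Fin d) (Fin d) ℝ) : ℝ :=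
  ‖LinearMap.toContinuousLinearMap (Matrix.toEuclideanLin A)‖

open Relation

theorem Matrix.reflTransGen_of_pow_apply_ne_zero {n R : Type*} [Fintype n] [DecidableEq n]
    [Semiring R] {M : Matrix n n R} {r : n → n → Prop} (hM : ∀ i j, M i j ≠ 0 → r i j) :
    ∀ (k : ℕ) {i j : n}, (M ^ k) i j ≠ 0 → ReflTransGen r i j
  | 0, i, j, h => by
    obtain rfl : i = j := by_contra fun hij => h (Matrix.one_apply_ne hij)
    exact ReflTransGen.refl
  | k + 1, i, j, h => by
    rw [pow_succ', Matrix.mul_apply] at h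
    obtain ⟨l, -, hl⟩ := Finset.exists_ne_zero_of_sum_ne_zero h
    exact .head (hM i l (left_ne_zero_of_mul hl))
      (reflTransGen_of_pow_apply_ne_zero hM k (right_ne_zero_of_mul hl))

section Covering

variable {V ι : Type*} [AddCommGroup V] [Module ℝ V]

theorem image_convexHull_subset_iUnion_of_reflTransGen {C : ι → Set V}
    (hC : ∀ j, Convex ℝ (C j))
    (hchain : ∀ i j, ReflTransGen (fun i j => (C i ∩ C j).Nonempty) i j)
    {S : Set V} (hS : S ⊆ ⋃ j, C j) (φ : V →ᵃ[ℝ] ℝ) :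
    φ '' convexHull ℝ S ⊆ ⋃ j, φ '' C j := by
  have hconn : IsPreconnected (⋃ j, φ '' C j) :=
    IsPreconnected.iUnion_of_reflTransGen (fun j => ((hC j).affine_image φ).isPreconnected)
      fun i j => ReflTransGen.mono (fun _ _ ⟨z, hzi, hzj⟩ =>
        ⟨φ z, mem_image_of_mem _ hzi, mem_image_of_mem _ hzj⟩) i j (hchain i j)
  rw [AffineMap.image_convexHull]
  refine convexHull_min ?_ (convex_iff_ordConnected.mpr hconn.ordConnected)
  rw [image_iUnion.symm]
  exact image_mono hS

-- The first letter of `w` is applied last: `ifsComp f [i, j] = f i ∘ f j`.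
def ifsComp (f : ι → V →ᵃ[ℝ] V) (w : List ι) : V →ᵃ[ℝ] V := (w.map f).prod

@[simp]
theorem ifsComp_nil (f : ι → V →ᵃ[ℝ] V) : ifsComp f [] = 1 := rfl

@[simp]
theorem ifsComp_cons (f : ι → V →ᵃ[ℝ] V) (i : ι) (w : List ι) :
    ifsComp f (i :: w) = f i * ifsComp f w := rfl

theorem exists_word_mem_image_ifsComp {f : ι → V →ᵃ[ℝ] V} {E : Set V}
    (hcover : E ⊆ ⋃ i, f i '' E)
    (hchain : ∀ i j, ReflTransGen
      (fun i j => (convexHull ℝ (f i '' E) ∩ convexHull ℝ (f j '' E)).Nonempty) i j)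
    (n : ℕ) (φ : V →ᵃ[ℝ] ℝ) {t : ℝ} (ht : t ∈ φ '' convexHull ℝ E) :
    ∃ w : List ι, w.length = n ∧ t ∈ φ '' (ifsComp f w '' convexHull ℝ E) := by
  induction n generalizing φ with
  | zero => exact ⟨[], rfl, by simpa using ht⟩
  | succ n ih =>
    have hpieces := image_convexHull_subset_iUnion_of_reflTransGen
      (fun i => convex_convexHull ℝ _) hchain
      (hcover.trans (iUnion_mono fun i => subset_convexHull ℝ _)) φ ht
    obtain ⟨i, hi⟩ := mem_iUnion.mp hpieces
    rw [← AffineMap.image_convexHull, image_image] at hi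
    obtain ⟨w, rfl, hw⟩ := ih (φ.comp (f i)) hi
    refine ⟨i :: w, rfl, ?_⟩
    simpa [image_image] using hw

end Covering

section Attractor

variable {V ι : Type*} [NormedAddCommGroup V] [NormedSpace ℝ V]

theorem image_ifsComp_subset {f : ι → V →ᵃ[ℝ] V} {E : Set V} (hf : ∀ i, f i '' E ⊆ E) :
    ∀ w : List ι, ifsComp f w '' E ⊆ E
  | [] => by simp
  | i :: w => by
    rw [ifsComp_cons, AffineMap.coe_mul, image_comp]
    exact (image_mono (image_ifsComp_subset hf w)).trans (hf i)

theorem lipschitzWith_ifsComp {f : ι → V →ᵃ[ℝ] V} {K : NNReal} (hf : ∀ i, LipschitzWith K (f i)) :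
    ∀ w : List ι, LipschitzWith (K ^ w.length) (ifsComp f w)
  | [] => by simpa using LipschitzWith.id
  | i :: w => by
    rw [ifsComp_cons, AffineMap.coe_mul, List.length_cons, pow_succ']
    exact (hf i).comp (lipschitzWith_ifsComp hf w)

theorem image_convexHull_eq_image_of_attractor {f : ι → V →ᵃ[ℝ] V} {K : NNReal} (hK : K < 1)
    (hf : ∀ i, LipschitzWith K (f i)) {E : Set V} (hE : IsCompact E)
    (hattr : E = ⋃ i, f i '' E)
    (hchain : ∀ i j, ReflTransGen
      (fun i j => (convexHull ℝ (f i '' E) ∩ convexHull ℝ (f j '' E)).Nonempty) i j)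
    (φ : V →L[ℝ] ℝ) :
    φ '' convexHull ℝ E = φ '' E := by
  refine Subset.antisymm ?_ (image_mono (subset_convexHull ℝ E))
  intro t ht
  rw [← (hE.image φ.continuous).isClosed.closure_eq, Metric.mem_closure_iff]
  intro ε hε
  set D := Metric.diam (convexHull ℝ E)
  have hsmall : ∀ᶠ n : ℕ in Filter.atTop, ‖φ‖ * ((K : ℝ) ^ n * D) < ε := by
    refine Filter.Tendsto.eventually_lt_const hε ?_
    simpa using ((tendsto_pow_atTop_nhds_zero_of_lt_one K.2 hK).mul_const D).const_mul ‖φ‖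
  obtain ⟨n, hn⟩ := hsmall.exists
  obtain ⟨w, rfl, _, ⟨x, hx, rfl⟩, rfl⟩ :=
    exists_word_mem_image_ifsComp hattr.subset hchain n φ.toLinearMap.toAffineMap ht
  obtain ⟨x₀, hx₀⟩ := convexHull_nonempty_iff.mp ⟨x, hx⟩
  have hpiece : ∀ i, f i '' E ⊆ E := fun i =>
    (subset_iUnion (fun j => f j '' E) i).trans hattr.superset
  refine ⟨φ (ifsComp f w x₀), mem_image_of_mem _ (image_ifsComp_subset hpiece w ⟨x₀, hx₀, rfl⟩),
    lt_of_le_of_lt ?_ hn⟩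
  calc dist (φ (ifsComp f w x)) (φ (ifsComp f w x₀))
      ≤ ‖φ‖ * dist (ifsComp f w x) (ifsComp f w x₀) := φ.lipschitz.dist_le_mul _ _
    _ ≤ ‖φ‖ * ((K : ℝ) ^ w.length * D) := by
      gcongr
      calc dist (ifsComp f w x) (ifsComp f w x₀)
          ≤ (K : ℝ) ^ w.length * dist x x₀ := by
            simpa using (lipschitzWith_ifsComp hf w).dist_le_mul x x₀
        _ ≤ (K : ℝ) ^ w.length * D := by
            gcongr
            exact Metric.dist_le_diam_of_mem (isBounded_convexHull.mpr hE.isBounded) hx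
              (subset_convexHull ℝ E hx₀)

end Attractor

theorem lipschitzWith_toEuclideanLin_add {d : ℕ} (A : Matrix (Fin d) (Fin d) ℝ)
    (a : EuclideanSpace ℝ (Fin d)) :
    LipschitzWith (opN A).toNNReal (fun x => Matrix.toEuclideanLin A x + a) := by
  refine LipschitzWith.of_dist_le_mul fun x y => ?_
  rw [dist_add_right, Real.coe_toNNReal (opN A) (norm_nonneg _)]
  exact (LinearMap.toContinuousLinearMap (Matrix.toEuclideanLin A)).lipschitz.dist_le_mul x y

theorem projection_eq_projection_of_convexHull_general (d κ : ℕ)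
    (A : Fin κ → Matrix (Fin d) (Fin d) ℝ) (a : Fin κ → EuclideanSpace ℝ (Fin d))
    (ᾱ : ℝ) (hᾱ : ᾱ < 1) (hnorm : ∀ i, opN (A i) ≤ ᾱ)
    (E : Set (EuclideanSpace ℝ (Fin d))) (hEne : E.Nonempty) (hEc : IsCompact E)
    (hattr : E = ⋃ i, (fun x => Matrix.toEuclideanLin (A i) x + a i) '' E)
    (M : Matrix (Fin κ) (Fin κ) ℝ)
    (hM0 : ∀ i j,
      ¬ (convexHull ℝ ((fun x => Matrix.toEuclideanLin (A i) x + a i) '' E) ∩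
        convexHull ℝ ((fun x => Matrix.toEuclideanLin (A j) x + a j) '' E)).Nonempty →
      M i j = 0)
    (hirr : ∀ i j, ∃ n : ℕ, 0 < n ∧ 0 < (M ^ n) i j) :
    ∀ e : EuclideanSpace ℝ (Fin d),
      (fun x => (inner ℝ x e : ℝ)) '' E = (fun x => (inner ℝ x e : ℝ)) '' convexHull ℝ E ∧
      ∃ p q : ℝ, p ≤ q ∧ (fun x => (inner ℝ x e : ℝ)) '' E = Set.Icc p q := by
  intro e
  let f i : EuclideanSpace ℝ (Fin d) →ᵃ[ℝ] EuclideanSpace ℝ (Fin d) :=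
    (Matrix.toEuclideanLin (A i)).toAffineMap + AffineMap.const ℝ _ (a i)
  have hlip i : LipschitzWith ᾱ.toNNReal (f i) :=
    (lipschitzWith_toEuclideanLin_add (A i) (a i)).weaken (Real.toNNReal_le_toNNReal (hnorm i))
  have hchain : ∀ i j, ReflTransGen
      (fun i j => (convexHull ℝ (f i '' E) ∩ convexHull ℝ (f j '' E)).Nonempty) i j :=
    fun i j =>
      let ⟨n, _, hn⟩ := hirr i j
      M.reflTransGen_of_pow_apply_ne_zero (fun i j => not_imp_comm.mp (hM0 i j)) n hn.ne'
  have hπ : (fun x => (inner ℝ x e : ℝ)) = innerSL ℝ e := by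
    ext x; exact real_inner_comm e x
  have hconv := image_convexHull_eq_image_of_attractor (Real.toNNReal_lt_one.mpr hᾱ) hlip hEc
    hattr hchain (innerSL ℝ e)
  have hcpt : IsCompact (innerSL ℝ e '' convexHull ℝ E) :=
    hconv ▸ hEc.image (innerSL ℝ e).continuous
  have hconn : IsConnected (innerSL ℝ e '' convexHull ℝ E) :=
    ⟨(convexHull_nonempty_iff.mpr hEne).image _,
      ((convex_convexHull ℝ E).linear_image (innerSL ℝ e).toLinearMap).isPreconnected⟩
  rw [hπ, ← hconv]
  exact ⟨rfl, _, _, csInf_le_csSup hconn.nonempty hcpt.bddBelow hcpt.bddAbove,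
    eq_Icc_of_connected_compact hconn hcpt⟩

/-- Proposition 5.3: if the adjacency matrix of the convex hulls of the first-level pieces
of a self-affine set is irreducible, then every linear projection of the attractor `E`
coincides with the corresponding projection of its convex hull; in particular each such
projection is a closed interval (possibly degenerate). -/
theorem projection_eq_projection_of_convexHull (d κ : ℕ) (hκ : 2 ≤ κ)
    (A : Fin κ → Matrix (Fin d) (Fin d) ℝ) (a : Fin κ → EuclideanSpace ℝ (Fin d))
    (ᾱ : ℝ) (hᾱ : ᾱ < 1) (hinv : ∀ i, IsUnit (A i).det) (hnorm : ∀ i, opN (A i) ≤ ᾱ)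
    (E : Set (EuclideanSpace ℝ (Fin d))) (hEne : E.Nonempty) (hEc : IsCompact E)
    (hattr : E = ⋃ i, (fun x => Matrix.toEuclideanLin (A i) x + a i) '' E)
    (M : Matrix (Fin κ) (Fin κ) ℝ)
    (hM1 : ∀ i j,
      (convexHull ℝ ((fun x => Matrix.toEuclideanLin (A i) x + a i) '' E) ∩
        convexHull ℝ ((fun x => Matrix.toEuclideanLin (A j) x + a j) '' E)).Nonempty →
      M i j = 1)
    (hM0 : ∀ i j,
      ¬ (convexHull ℝ ((fun x => Matrix.toEuclideanLin (A i) x + a i) '' E) ∩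
        convexHull ℝ ((fun x => Matrix.toEuclideanLin (A j) x + a j) '' E)).Nonempty →
      M i j = 0)
    (hirr : ∀ i j, ∃ n : ℕ, 0 < n ∧ 0 < (M ^ n) i j) :
    ∀ e : EuclideanSpace ℝ (Fin d),
      (fun x => (inner ℝ x e : ℝ)) '' E = (fun x => (inner ℝ x e : ℝ)) '' convexHull ℝ E ∧
      ∃ p q : ℝ, p ≤ q ∧ (fun x => (inner ℝ x e : ℝ)) '' E = Set.Icc p q :=
  projection_eq_projection_of_convexHull_general d κ A a ᾱ hᾱ hnorm E hEne hEc hattr M hM0 hirr
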